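/- arXiv:2502.02360 — 4 statements merged into one kernel-verified Lean document; each statement's English description precedes it below -/
import Mathlib

section
/- Let (α, f) and (β, g) be FDDS. The unrolls U(f) and U(g) are isomorphic if and only if for every natural number n the cuts at depth n, U_n(f) and U_n(g), are isomorphic. -/
/-- Isomorphism of finite dynamical systems: a bijection commuting with the maps. -/
def FddsIso {α β : Type} (f : α → α) (g : β → β) : Prop :=
  ∃ e : α ≃ β, ⇑e ∘ f = g ∘ ⇑e

/-- A state is periodic if some positive iterate fixes it. -/
def IsPeriodicState {α : Type} (f : α → α) (x : α) : Prop :=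
  ∃ n > 0, f^[n] x = x

/-- The vertex set of the unroll of `(α, f)`. -/
def UnrollSet {α : Type} (f : α → α) : Set (α × ℕ) :=
  {p | IsPeriodicState f (f^[p.2] p.1)}

/-- The parent map of the unroll. -/
def unrollMap {α : Type} (f : α → α) (q : UnrollSet f) : UnrollSet f :=
  if h : q.1.2 = 0 then q
  else ⟨(f q.1.1, q.1.2 - 1), by
    obtain ⟨⟨x, k⟩, hq⟩ := q
    simp only at h
    obtain ⟨k', rfl⟩ := Nat.exists_eq_succ_of_ne_zero h
    simpa [UnrollSet, Function.iterate_succ_apply] using hq⟩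

/-- Isomorphism of unrolls. -/
def UnrollIso {α β : Type} (f : α → α) (g : β → β) : Prop :=
  ∃ φ : UnrollSet f ≃ UnrollSet g, ⇑φ ∘ unrollMap f = unrollMap g ∘ ⇑φ

/-- Vertices of the cut at depth `n` of the unroll. -/
def CutSet {α : Type} (f : α → α) (n : ℕ) : Set (α × ℕ) :=
  {p | p ∈ UnrollSet f ∧ p.2 ≤ n}

/-- The parent map of the cut at depth `n`. -/
def cutMap {α : Type} (f : α → α) (n : ℕ) (q : CutSet f n) : CutSet f n :=
  if h : q.1.2 = 0 then q
  else ⟨(f q.1.1, q.1.2 - 1), by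
    obtain ⟨⟨x, k⟩, hq⟩ := q
    obtain ⟨hq1, hq2⟩ := hq
    simp only at h hq2 ⊢
    obtain ⟨k', rfl⟩ := Nat.exists_eq_succ_of_ne_zero h
    refine ⟨by simpa [UnrollSet, Function.iterate_succ_apply] using hq1, by omega⟩⟩

/-- Isomorphism of cuts at depth `n`. -/
def CutIso {α β : Type} (f : α → α) (g : β → β) (n : ℕ) : Prop :=
  ∃ φ : CutSet f n ≃ CutSet g n, ⇑φ ∘ cutMap f n = cutMap g n ∘ ⇑φ

/-- The states of the components whose cycle length divides `p`. -/
def DivSet {α : Type} (f : α → α) (p : ℕ) : Set α :=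
  {x | ∃ N, f^[N + p] x = f^[N] x}

/-- The restriction of `f` to `DivSet f p`. -/
def divMap {α : Type} (f : α → α) (p : ℕ) (q : DivSet f p) : DivSet f p :=
  ⟨f q.1, by
    obtain ⟨x, N, hN⟩ := q
    exact ⟨N, by
      rw [← Function.iterate_succ_apply, ← Function.iterate_succ_apply,
        Function.iterate_succ_apply', Function.iterate_succ_apply', hN]⟩⟩

/-- `k`-th power of an FDDS: map on `Fin k → α`. -/
def powMap {α : Type} (f : α → α) (k : ℕ) (v : Fin k → α) : Fin k → α := f ∘ v

/-- Evaluation of the polynomial `Σ_{i=0}^m A_i X^i` at `(α, f)`. -/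
def polyEval {m : ℕ} {γ : Fin (m + 1) → Type} (g : ∀ i, γ i → γ i)
    {α : Type} (f : α → α)
    (x : Σ i : Fin (m + 1), γ i × (Fin i.val → α)) :
    Σ i : Fin (m + 1), γ i × (Fin i.val → α) :=
  ⟨x.1, g x.1 x.2.1, f ∘ x.2.2⟩

/-- Evaluation of the constant-free polynomial `Σ_{i=1}^m A_i X^i` at `(α, f)`. -/
def polyEvalNC {m : ℕ} {γ : Fin m → Type} (g : ∀ i, γ i → γ i)
    {α : Type} (f : α → α)
    (x : Σ i : Fin m, γ i × (Fin (i.val + 1) → α)) :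
    Σ i : Fin m, γ i × (Fin (i.val + 1) → α) :=
  ⟨x.1, g x.1 x.2.1, f ∘ x.2.2⟩

/-- An FDDS is cancelable if it can be canceled from products. -/
def Cancelable {α : Type} (f : α → α) : Prop :=
  ∀ (β γ : Type) [Fintype β] [Fintype γ] (g : β → β) (h : γ → γ),
    FddsIso (Prod.map f g) (Prod.map f h) → FddsIso g h

/-!
An isomorphism of unrolls, or of cuts, commutes with the parent maps and is therefore
depth-preserving: the depth of a vertex is the least `j` such that its `j`-th ancestor is a root,
i.e. a fixed point of the parent map. Hence it restricts to isomorphisms of all cuts, and an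
isomorphism of cuts at depth `n` restricts to one at every depth `m ≤ n`. Conversely, the
isomorphisms between the cuts at depth `n` form a finite nonempty set for each `n` (the cuts are
finite), and restriction makes them an inverse system; by Kőnig's lemma it has a compatible
sequence of elements, and their union is an isomorphism of the unrolls.
-/

open Function

namespace Unroll

variable {α β : Type}

def parent (f : α → α) (p : α × ℕ) : α × ℕ :=
  if p.2 = 0 then p else (f p.1, p.2 - 1)

@[simp]
lemma parent_snd (f : α → α) (p : α × ℕ) : (parent f p).2 = p.2 - 1 := by
  unfold parent; split_ifs <;> simp_all

lemma parent_of_snd_eq_zero (f : α → α) {p : α × ℕ} (h : p.2 = 0) : parent f p = p := if_pos h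

lemma coe_unrollMap (f : α → α) (q : UnrollSet f) : (unrollMap f q : α × ℕ) = parent f q := by
  unfold unrollMap parent; split_ifs <;> rfl

lemma coe_cutMap (f : α → α) (n : ℕ) (q : CutSet f n) : (cutMap f n q : α × ℕ) = parent f q := by
  unfold cutMap parent; split_ifs <;> rfl

lemma cutSet_subset_unrollSet (f : α → α) (n : ℕ) : CutSet f n ⊆ UnrollSet f := fun _ h => h.1

lemma cutSet_mono (f : α → α) {m n : ℕ} (h : m ≤ n) : CutSet f m ⊆ CutSet f n :=
  fun _ hp => ⟨hp.1, hp.2.trans h⟩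

instance (f : α → α) (n : ℕ) [Finite α] : Finite (CutSet f n) :=
  Set.Finite.subset (Set.finite_univ.prod (Set.finite_Iic n)) fun _ hp => ⟨trivial, hp.2⟩

section Depth

variable {f : α → α} {g : β → β} {S : Set (α × ℕ)} {T : Set (β × ℕ)} {μ : S → S} {ν : T → T}

lemma snd_le_iff_isFixedPt_iterate (hμ : ∀ q, (μ q : α × ℕ) = parent f q) (q : S) (j : ℕ) :
    (q : α × ℕ).2 ≤ j ↔ IsFixedPt μ (μ^[j] q) := by
  have hdepth : ∀ i, (μ^[i] q : α × ℕ).2 = (q : α × ℕ).2 - i := by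
    intro i
    induction i with
    | zero => rfl
    | succ i ih => rw [iterate_succ_apply', hμ, parent_snd, ih, Nat.sub_sub]
  constructor
  · intro h
    apply Subtype.ext
    rw [hμ, parent_of_snd_eq_zero f (by rw [hdepth]; omega)]
  · intro h
    have := congrArg (fun r : S => (r : α × ℕ).2) h
    simp only [hμ, parent_snd, hdepth] at this
    omega

lemma snd_apply_eq_of_semiconj (hμ : ∀ q, (μ q : α × ℕ) = parent f q)
    (hν : ∀ r, (ν r : β × ℕ) = parent g r) {e : S → T} (he_inj : Injective e)
    (he : Semiconj e μ ν) (q : S) : (e q : β × ℕ).2 = (q : α × ℕ).2 :=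
  eq_of_forall_ge_iff fun j => by
    rw [snd_le_iff_isFixedPt_iterate hν, snd_le_iff_isFixedPt_iterate hμ,
      ← (he.iterate_right j).eq, IsFixedPt, IsFixedPt, ← he.eq, he_inj.eq_iff]

lemma mem_cutSet_iff_of_semiconj (hSU : S ⊆ UnrollSet f) (hTU : T ⊆ UnrollSet g)
    (hμ : ∀ q, (μ q : α × ℕ) = parent f q) (hν : ∀ r, (ν r : β × ℕ) = parent g r)
    (e : S ≃ T) (he : Semiconj e μ ν) (m : ℕ) (q : S) :
    (q : α × ℕ) ∈ CutSet f m ↔ (e q : β × ℕ) ∈ CutSet g m := by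
  change _ ∧ _ ↔ _ ∧ _
  rw [and_iff_right (hSU q.2), and_iff_right (hTU (e q).2),
    snd_apply_eq_of_semiconj hμ hν e.injective he]

end Depth

section Restrict

variable {f : α → α} {g : β → β} {S S' : Set (α × ℕ)} {T T' : Set (β × ℕ)}

def restrictEquiv (e : S ≃ T) (hS : S' ⊆ S) (hT : T' ⊆ T)
    (hmem : ∀ q : S, (q : α × ℕ) ∈ S' ↔ (e q : β × ℕ) ∈ T') : S' ≃ T' :=
  (Equiv.subtypeSubtypeEquivSubtype fun h => hS h).symm.trans
    ((e.subtypeEquiv hmem).trans (Equiv.subtypeSubtypeEquivSubtype fun h => hT h))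

lemma coe_restrictEquiv_apply (e : S ≃ T) (hS : S' ⊆ S) (hT : T' ⊆ T)
    (hmem : ∀ q : S, (q : α × ℕ) ∈ S' ↔ (e q : β × ℕ) ∈ T') (q : S') :
    (restrictEquiv e hS hT hmem q : β × ℕ) = e ⟨q, hS q.2⟩ :=
  rfl

lemma semiconj_restrictEquiv {μ : S → S} {ν : T → T} {μ' : S' → S'} {ν' : T' → T'}
    (hμ : ∀ q, (μ q : α × ℕ) = parent f q) (hν : ∀ r, (ν r : β × ℕ) = parent g r)
    (hμ' : ∀ q, (μ' q : α × ℕ) = parent f q) (hν' : ∀ r, (ν' r : β × ℕ) = parent g r)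
    (e : S ≃ T) (he : Semiconj e μ ν) (hS : S' ⊆ S) (hT : T' ⊆ T)
    (hmem : ∀ q : S, (q : α × ℕ) ∈ S' ↔ (e q : β × ℕ) ∈ T') :
    Semiconj (restrictEquiv e hS hT hmem) μ' ν' := by
  intro q
  apply Subtype.ext
  have hq : (⟨μ' q, hS (μ' q).2⟩ : S) = μ ⟨q, hS q.2⟩ := Subtype.ext <| by rw [hμ', hμ]
  rw [coe_restrictEquiv_apply, hν', coe_restrictEquiv_apply, hq, he.eq, hν]

end Restrict

variable (f : α → α) (g : β → β)

def CutConj (n : ℕ) : Type :=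
  {e : CutSet f n ≃ CutSet g n // Semiconj e (cutMap f n) (cutMap g n)}

instance (n : ℕ) [Finite α] [Finite β] : Finite (CutConj f g n) :=
  Subtype.finite

variable {f g}

lemma cutIso_iff_nonempty_cutConj (n : ℕ) : CutIso f g n ↔ Nonempty (CutConj f g n) := by
  simp only [CutIso, ← semiconj_iff_comp_eq]
  exact ⟨fun ⟨e, he⟩ => ⟨⟨e, he⟩⟩, fun ⟨e⟩ => ⟨e.1, e.2⟩⟩

namespace CutConj

def ofUnroll (φ : UnrollSet f ≃ UnrollSet g) (hφ : Semiconj φ (unrollMap f) (unrollMap g))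
    (n : ℕ) : CutConj f g n :=
  ⟨restrictEquiv φ (cutSet_subset_unrollSet f n) (cutSet_subset_unrollSet g n)
      (mem_cutSet_iff_of_semiconj subset_rfl subset_rfl (coe_unrollMap f) (coe_unrollMap g) φ hφ n),
    semiconj_restrictEquiv (coe_unrollMap f) (coe_unrollMap g) (coe_cutMap f n) (coe_cutMap g n)
      φ hφ _ _ _⟩

def symm {n : ℕ} (e : CutConj f g n) : CutConj g f n :=
  ⟨e.1.symm, e.2.inverse_left e.1.left_inv e.1.right_inv⟩

lemma snd_apply {n : ℕ} (e : CutConj f g n) (q : CutSet f n) :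
    (e.1 q : β × ℕ).2 = (q : α × ℕ).2 :=
  snd_apply_eq_of_semiconj (coe_cutMap f n) (coe_cutMap g n) e.1.injective e.2 q

def restrict {m n : ℕ} (h : m ≤ n) (e : CutConj f g n) : CutConj f g m :=
  ⟨restrictEquiv e.1 (cutSet_mono f h) (cutSet_mono g h)
      (mem_cutSet_iff_of_semiconj (cutSet_subset_unrollSet f n) (cutSet_subset_unrollSet g n)
        (coe_cutMap f n) (coe_cutMap g n) e.1 e.2 m),
    semiconj_restrictEquiv (coe_cutMap f n) (coe_cutMap g n) (coe_cutMap f m) (coe_cutMap g m)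
      e.1 e.2 _ _ _⟩

lemma restrict_refl {n : ℕ} (e : CutConj f g n) : e.restrict le_rfl = e :=
  Subtype.ext <| Equiv.ext fun _ => rfl

lemma restrict_restrict {l m n : ℕ} (hlm : l ≤ m) (hmn : m ≤ n) (e : CutConj f g n) :
    (e.restrict hmn).restrict hlm = e.restrict (hlm.trans hmn) :=
  Subtype.ext <| Equiv.ext fun _ => rfl

lemma symm_restrict {m n : ℕ} (h : m ≤ n) (e : CutConj f g n) :
    (e.restrict h).symm = e.symm.restrict h :=
  Subtype.ext <| Equiv.ext fun _ => rfl

end CutConj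

section Glue

def IsCompatible (s : ∀ n, CutConj f g n) : Prop :=
  ∀ ⦃m n⦄ (h : m ≤ n), (s n).restrict h = s m

variable {s : ∀ n, CutConj f g n}

lemma IsCompatible.symm (hs : IsCompatible s) : IsCompatible fun n => (s n).symm :=
  fun _ _ h => by rw [← CutConj.symm_restrict, hs h]

variable (s) in
def glue (q : UnrollSet f) : UnrollSet g :=
  ⟨(s (q : α × ℕ).2).1 ⟨q, q.2, le_rfl⟩, ((s _).1 _).2.1⟩

lemma coe_glue_of_le (hs : IsCompatible s) (q : UnrollSet f) {n : ℕ} (h : (q : α × ℕ).2 ≤ n) :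
    (glue s q : β × ℕ) = (s n).1 ⟨q, q.2, h⟩ :=
  (congrArg (fun e : CutConj f g (q : α × ℕ).2 => (e.1 ⟨q, q.2, le_rfl⟩ : β × ℕ)) (hs h)).symm

lemma snd_glue (q : UnrollSet f) : (glue s q : β × ℕ).2 = (q : α × ℕ).2 :=
  CutConj.snd_apply _ _

lemma glue_symm_glue (hs : IsCompatible s) (q : UnrollSet f) :
    glue (fun n => (s n).symm) (glue s q) = q := by
  apply Subtype.ext
  have hq : (⟨glue s q, (glue s q).2, (snd_glue q).le⟩ : CutSet g _) = (s _).1 ⟨q, q.2, le_rfl⟩ :=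
    rfl
  rw [coe_glue_of_le hs.symm _ (snd_glue q).le, CutConj.symm, hq, Equiv.symm_apply_apply]

lemma semiconj_glue (hs : IsCompatible s) : Semiconj (glue s) (unrollMap f) (unrollMap g) := by
  intro q
  have hle : (unrollMap f q : α × ℕ).2 ≤ (q : α × ℕ).2 := by
    rw [coe_unrollMap, parent_snd]; omega
  have hq : (⟨unrollMap f q, (unrollMap f q).2, hle⟩ : CutSet f _) = cutMap f _ ⟨q, q.2, le_rfl⟩ :=
    Subtype.ext <| by rw [coe_unrollMap, coe_cutMap]
  apply Subtype.ext
  rw [coe_glue_of_le hs _ hle, hq, (s _).2.eq, coe_cutMap, coe_unrollMap, glue]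

def IsCompatible.glueEquiv (hs : IsCompatible s) : UnrollSet f ≃ UnrollSet g where
  toFun := glue s
  invFun := glue fun n => (s n).symm
  left_inv := glue_symm_glue hs
  right_inv := glue_symm_glue hs.symm

end Glue

end Unroll

open Unroll

/-- Two unrolls are isomorphic iff all their cuts are isomorphic. -/
theorem unrollIso_iff_forall_cutIso {α β : Type} [Fintype α] [Fintype β]
    (f : α → α) (g : β → β) :
    UnrollIso f g ↔ ∀ n : ℕ, CutIso f g n := by
  simp only [cutIso_iff_nonempty_cutConj]
  constructor
  · rintro ⟨φ, hφ⟩ n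
    exact ⟨CutConj.ofUnroll φ (semiconj_iff_comp_eq.mpr hφ) n⟩
  · intro h
    obtain ⟨s, hs : IsCompatible s⟩ := exists_seq_forall_proj_of_forall_finite (α := CutConj f g)
      (fun h e => e.restrict h) (fun _ e => e.restrict_refl)
      (fun _ _ _ hij hjk e => e.restrict_restrict hij hjk) (fun _ _ => Set.toFinite _)
    exact ⟨hs.glueEquiv, semiconj_iff_comp_eq.mp (semiconj_glue hs)⟩
end

section
/- Let p > 0 be an integer. The operation Div(·, p) is a semiring homomorphism on FDDS up to isomorphism: (1) Div of the one-point identity system is the one-point identity system; (2) for all FDDS (α, f), (β, g), Div(Sum.map f g, p) is isomorphic to the sum Div(f, p) ⊕ Div(g, p); and (3) Div(Prod.map f g, p) is isomorphic to the product Div(f, p) × Div(g, p). -/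
lemma sum_map_iterate_inl {α β : Type} (f : α → α) (g : β → β) (n : ℕ) (x : α) :
    (Sum.map f g)^[n] (Sum.inl x) = Sum.inl (f^[n] x) := by
  induction n with
  | zero => rfl
  | succ n ih => rw [Function.iterate_succ_apply', ih, Function.iterate_succ_apply']; rfl

lemma sum_map_iterate_inr {α β : Type} (f : α → α) (g : β → β) (n : ℕ) (y : β) :
    (Sum.map f g)^[n] (Sum.inr y) = Sum.inr (g^[n] y) := by
  induction n with
  | zero => rfl
  | succ n ih => rw [Function.iterate_succ_apply', ih, Function.iterate_succ_apply']; rfl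

lemma prod_map_iterate {α β : Type} (f : α → α) (g : β → β) (n : ℕ) (x : α) (y : β) :
    (Prod.map f g)^[n] (x, y) = (f^[n] x, g^[n] y) := by
  induction n with
  | zero => rfl
  | succ n ih => rw [Function.iterate_succ_apply', ih, Function.iterate_succ_apply',
      Function.iterate_succ_apply']; rfl

lemma div_mono {α : Type} (f : α → α) (p N M : ℕ) (hNM : N ≤ M) (x : α)
    (h : f^[N + p] x = f^[N] x) : f^[M + p] x = f^[M] x := by
  have h1 : M + p = (M - N) + (N + p) := by omega
  have h2 : M = (M - N) + N := by omega
  rw [h1, Function.iterate_add_apply, h, ← Function.iterate_add_apply, ← h2]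

lemma inl_mem_div {α β : Type} (f : α → α) (g : β → β) (p : ℕ) (x : α) :
    Sum.inl x ∈ DivSet (Sum.map f g) p ↔ x ∈ DivSet f p := by
  simp only [DivSet, Set.mem_setOf_eq, sum_map_iterate_inl, Sum.inl.injEq]

lemma inr_mem_div {α β : Type} (f : α → α) (g : β → β) (p : ℕ) (y : β) :
    Sum.inr y ∈ DivSet (Sum.map f g) p ↔ y ∈ DivSet g p := by
  simp only [DivSet, Set.mem_setOf_eq, sum_map_iterate_inr, Sum.inr.injEq]

lemma prod_mem_div {α β : Type} (f : α → α) (g : β → β) (p : ℕ) (x : α) (y : β) :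
    (x, y) ∈ DivSet (Prod.map f g) p ↔ x ∈ DivSet f p ∧ y ∈ DivSet g p := by
  simp only [DivSet, Set.mem_setOf_eq, prod_map_iterate, Prod.mk.injEq]
  constructor
  · rintro ⟨N, h1, h2⟩; exact ⟨⟨N, h1⟩, ⟨N, h2⟩⟩
  · rintro ⟨⟨N1, h1⟩, ⟨N2, h2⟩⟩
    exact ⟨max N1 N2, div_mono f p N1 _ (le_max_left _ _) x h1,
      div_mono g p N2 _ (le_max_right _ _) y h2⟩

def sumDivEquiv {α β : Type} (f : α → α) (g : β → β) (p : ℕ) :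
    DivSet (Sum.map f g) p ≃ (DivSet f p ⊕ DivSet g p) where
  toFun q := match q with
    | ⟨Sum.inl x, h⟩ => Sum.inl ⟨x, (inl_mem_div f g p x).1 h⟩
    | ⟨Sum.inr y, h⟩ => Sum.inr ⟨y, (inr_mem_div f g p y).1 h⟩
  invFun q := match q with
    | Sum.inl ⟨x, h⟩ => ⟨Sum.inl x, (inl_mem_div f g p x).2 h⟩
    | Sum.inr ⟨y, h⟩ => ⟨Sum.inr y, (inr_mem_div f g p y).2 h⟩
  left_inv q := by rcases q with ⟨(x | y), h⟩ <;> rfl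
  right_inv q := by rcases q with (⟨x, h⟩ | ⟨y, h⟩) <;> rfl

def prodDivEquiv {α β : Type} (f : α → α) (g : β → β) (p : ℕ) :
    DivSet (Prod.map f g) p ≃ (DivSet f p × DivSet g p) where
  toFun q := ⟨⟨q.1.1, ((prod_mem_div f g p q.1.1 q.1.2).1 q.2).1⟩,
              ⟨q.1.2, ((prod_mem_div f g p q.1.1 q.1.2).1 q.2).2⟩⟩
  invFun q := ⟨(q.1.1, q.2.1), (prod_mem_div f g p q.1.1 q.2.1).2 ⟨q.1.2, q.2.2⟩⟩
  left_inv q := rfl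
  right_inv q := rfl

/-- For `p > 0`, the operation `Div(·, p)` is a semiring homomorphism
on FDDS up to isomorphism: it preserves the one-point identity system, sums, and
products. -/
theorem div_semiring_hom (p : ℕ) (hp : 0 < p) :
    FddsIso (divMap (id : PUnit → PUnit) p) (id : PUnit → PUnit) ∧
    (∀ (α β : Type) [Fintype α] [Fintype β] (f : α → α) (g : β → β),
      FddsIso (divMap (Sum.map f g) p) (Sum.map (divMap f p) (divMap g p)) ∧
      FddsIso (divMap (Prod.map f g) p) (Prod.map (divMap f p) (divMap g p))) := by
  refine ⟨⟨⟨fun _ => PUnit.unit, fun _ => ⟨PUnit.unit, 0, by simp⟩,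
      fun q => Subtype.ext (Subsingleton.elim _ _), fun _ => rfl⟩, funext fun _ => rfl⟩,
    fun α β _ _ f g => ⟨?_, ?_⟩⟩
  · refine ⟨sumDivEquiv f g p, funext fun q => ?_⟩
    rcases q with ⟨(x | y), h⟩ <;> rfl
  · exact ⟨prodDivEquiv f g p, funext fun q => rfl⟩
end

section
/- Let P = Σ_{i=1}^m A_i X^i be a polynomial over FDDS without constant term. If at least one coefficient A_i is cancelable, then P is injective up to isomorphism: for all FDDS X, Y, if P(X) ≅ P(Y) then X ≅ Y. -/
/-!
For a connected system `C`, `X ↦ #Hom(C, X)` turns sums into sums and products into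
products, so `#Hom(C, P(X)) = Σ #Hom(C, A_i) · #Hom(C, X)^(i+1)`. A cancelable coefficient
has a fixed point, hence `#Hom(C, A_i) ≥ 1` and this polynomial in `#Hom(C, X)` is strictly
increasing. So `P(X) ≅ P(Y)` forces `#Hom(C, X) = #Hom(C, Y)` for every connected `C`,
hence for every `C`, and by Lovász's counting theorem `X ≅ Y`.
-/

open Function

theorem fddsIso_iff_exists_semiconj {α β : Type} {f : α → α} {g : β → β} :
    FddsIso f g ↔ ∃ e : α ≃ β, Semiconj e f g :=
  exists_congr fun _ => semiconj_iff_comp_eq.symm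

theorem FddsIso.exists_isFixedPt {α β : Type} {f : α → α} {g : β → β} (hfg : FddsIso f g)
    {a : α} (ha : IsFixedPt f a) : ∃ b, IsFixedPt g b := by
  obtain ⟨e, he⟩ := fddsIso_iff_exists_semiconj.mp hfg
  exact ⟨e a, he.mapsTo_fixedPoints ha⟩

abbrev FddsHom {α β : Type} (f : α → α) (g : β → β) : Type :=
  {h : α → β // Semiconj h f g}

abbrev FddsEmb {α β : Type} (f : α → α) (g : β → β) : Type :=
  {h : α → β // Injective h ∧ Semiconj h f g}

noncomputable def homCount {α β : Type} (f : α → α) (g : β → β) : ℕ :=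
  Nat.card (FddsHom f g)

noncomputable def embCount {α β : Type} (f : α → α) (g : β → β) : ℕ :=
  Nat.card (FddsEmb f g)

section Transport

variable {γ α β : Type} {f : α → α} {g : β → β}

theorem semiconj_equiv_comp_iff (e : α ≃ β) (he : Semiconj e f g) {c : γ → γ}
    {h : γ → α} :
    Semiconj (e ∘ h) c g ↔ Semiconj h c f := by
  refine ⟨fun H => ?_, he.comp_left⟩
  simpa [comp_def] using (he.inverse_left e.left_inv e.right_inv).comp_left H

theorem semiconj_comp_equiv_iff (e : α ≃ β) (he : Semiconj e f g) {c : γ → γ}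
    {h : β → γ} :
    Semiconj (h ∘ e) f c ↔ Semiconj h g c := by
  refine ⟨fun H => ?_, fun H => H.comp_left he⟩
  simpa [comp_def] using H.comp_left (he.inverse_left e.left_inv e.right_inv)

theorem homCount_congr_right (c : γ → γ) (hfg : FddsIso f g) :
    homCount c f = homCount c g := by
  obtain ⟨e, he⟩ := fddsIso_iff_exists_semiconj.mp hfg
  exact Nat.card_congr (((Equiv.refl γ).arrowCongr e).subtypeEquiv
    fun _ => (semiconj_equiv_comp_iff e he).symm)

theorem embCount_congr_left (c : γ → γ) (hfg : FddsIso f g) :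
    embCount f c = embCount g c := by
  obtain ⟨e, he⟩ := fddsIso_iff_exists_semiconj.mp hfg
  refine (Nat.card_congr ((e.symm.arrowCongr (Equiv.refl γ)).subtypeEquiv fun h => ?_)).symm
  change _ ↔ Injective (h ∘ e) ∧ Semiconj (h ∘ e) f c
  rw [e.injective_comp, semiconj_comp_equiv_iff e he]

end Transport

section Arithmetic

variable {γ α β : Type} (c : γ → γ)

theorem homCount_prodMap (f : α → α) (g : β → β) :
    homCount c (Prod.map f g) = homCount c f * homCount c g := by
  let e : FddsHom c (Prod.map f g) ≃ FddsHom c f × FddsHom c g :=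
    { toFun h := (⟨Prod.fst ∘ h.1, fun x => congrArg Prod.fst (h.2 x)⟩,
        ⟨Prod.snd ∘ h.1, fun x => congrArg Prod.snd (h.2 x)⟩)
      invFun p := ⟨fun x => (p.1.1 x, p.2.1 x), fun x => Prod.ext (p.1.2 x) (p.2.2 x)⟩
      left_inv _ := rfl
      right_inv _ := rfl }
  rw [homCount, Nat.card_congr e, Nat.card_prod, homCount, homCount]

theorem homCount_powMap (f : α → α) (k : ℕ) :
    homCount c (powMap f k) = homCount c f ^ k := by
  let e : FddsHom c (powMap f k) ≃ (Fin k → FddsHom c f) :=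
    { toFun h i := ⟨fun x => h.1 x i, fun x => congrFun (h.2 x) i⟩
      invFun H := ⟨fun x i => (H i).1 x, fun x => funext fun i => (H i).2 x⟩
      left_inv _ := rfl
      right_inv _ := rfl }
  rw [homCount, Nat.card_congr e, Nat.card_fun, Nat.card_fin, homCount]

end Arithmetic

theorem exists_sigmaMk_comp_eq_of_fst_eq {γ J : Type} {β : J → Type} {h : γ → Σ j, β j}
    {j : J} (hj : ∀ t, (h t).1 = j) : ∃ h' : γ → β j, Sigma.mk j ∘ h' = h :=
  ⟨fun t => Equiv.sigmaSubtype j ⟨h t, hj t⟩,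
    funext fun t =>
      congrArg Subtype.val ((Equiv.sigmaSubtype j).symm_apply_apply ⟨h t, hj t⟩)⟩

def FddsConnected {γ : Type} (c : γ → γ) : Prop :=
  Nonempty γ ∧ ∀ a b, ∃ m n, c^[m] a = c^[n] b

namespace FddsConnected

variable {γ : Type} {c : γ → γ}

theorem apply_eq_of_invariant (hc : FddsConnected c) {J : Type} {φ : γ → J}
    (hφ : ∀ x, φ (c x) = φ x) (a b : γ) : φ a = φ b := by
  have hφ_iter : ∀ k x, φ (c^[k] x) = φ x := fun k x => by
    simpa using (show Semiconj φ c id from hφ).iterate_right k x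
  obtain ⟨m, n, hmn⟩ := hc.2 a b
  rw [← hφ_iter m a, hmn, hφ_iter n b]

theorem bijective_sigmaMk_comp (hc : FddsConnected c) {J : Type} {β : J → Type}
    (G : ∀ j, β j → β j) :
    Bijective fun p : Σ j, FddsHom c (G j) => (⟨Sigma.mk p.1 ∘ p.2.1,
      fun x => congrArg (Sigma.mk p.1) (p.2.2 x)⟩ : FddsHom c (Sigma.map id G)) := by
  obtain ⟨t₀⟩ := hc.1
  refine ⟨?_, fun H => ?_⟩
  · rintro ⟨j, h⟩ ⟨j', h'⟩ hhh'
    have hfun : Sigma.mk j ∘ h.1 = Sigma.mk j' ∘ h'.1 := congrArg Subtype.val hhh'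
    obtain rfl : j = j' := congrArg Sigma.fst (congrFun hfun t₀)
    exact congrArg (Sigma.mk j)
      (Subtype.ext (funext fun t => sigma_mk_injective (congrFun hfun t)))
  · have hfst : ∀ x, (H.1 (c x)).1 = (H.1 x).1 := fun x => (congrArg Sigma.fst (H.2 x) :)
    obtain ⟨h, hh⟩ := exists_sigmaMk_comp_eq_of_fst_eq (h := H.1)
      (hc.apply_eq_of_invariant (φ := fun t => (H.1 t).1) hfst · t₀)
    refine ⟨⟨_, h, fun x => sigma_mk_injective ?_⟩, Subtype.ext hh⟩
    have hx := H.2 x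
    rw [← hh] at hx
    exact hx

theorem homCount_sigmaMap (hc : FddsConnected c) [Finite γ] {J : Type} [Fintype J]
    {β : J → Type} [∀ j, Finite (β j)] (G : ∀ j, β j → β j) :
    homCount c (Sigma.map id G) = ∑ j, homCount c (G j) := by
  rw [homCount, ← Nat.card_congr (Equiv.ofBijective _ (hc.bijective_sigmaMk_comp G)),
    Nat.card_sigma]
  rfl

end FddsConnected

section Components

variable {γ : Type} (c : γ → γ)

theorem mapsTo_preimage_singleton_of_invariant {Q : Type} {π : γ → Q}
    (hπ : ∀ x, π (c x) = π x) (q : Q) : Set.MapsTo c (π ⁻¹' {q}) (π ⁻¹' {q}) :=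
  fun x hx => (hπ x).trans hx

def homEquivPiFiber {Q : Type} {π : γ → Q} (hπ : ∀ x, π (c x) = π x) {δ : Type}
    (y : δ → δ) :
    FddsHom c y ≃ ∀ q, FddsHom (mapsTo_preimage_singleton_of_invariant c hπ q).restrict y :=
  have glue : ∀ (H : ∀ q, FddsHom (mapsTo_preimage_singleton_of_invariant c hπ q).restrict y)
      (q : Q) (t : π ⁻¹' {q}), (H (π t)).1 ⟨t, rfl⟩ = (H q).1 t := by
    rintro H q ⟨t, rfl⟩; rfl
  { toFun h q := ⟨h.1 ∘ Subtype.val, fun t => h.2 t⟩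
    invFun H := ⟨fun t => (H (π t)).1 ⟨t, rfl⟩, fun t =>
      (glue H (π t) ⟨c t, hπ t⟩).trans ((H (π t)).2 ⟨t, rfl⟩)⟩
    left_inv _ := rfl
    right_inv H := funext fun q => Subtype.ext (funext (glue H q)) }

def componentSetoid : Setoid γ where
  r a b := ∃ m n, c^[m] a = c^[n] b
  iseqv :=
    { refl := fun _ => ⟨0, 0, rfl⟩
      symm := fun ⟨m, n, h⟩ => ⟨n, m, h.symm⟩
      trans := fun {a b d} ⟨m, n, h₁⟩ ⟨m', n', h₂⟩ => ⟨m' + m, n + n', by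
        calc c^[m' + m] a = c^[m'] (c^[n] b) := by rw [iterate_add_apply, h₁]
          _ = c^[n] (c^[m'] b) := by rw [← iterate_add_apply, add_comm, iterate_add_apply]
          _ = c^[n + n'] d := by rw [h₂, iterate_add_apply]⟩ }

theorem componentSetoid_invariant (x : γ) :
    Quotient.mk (componentSetoid c) (c x) = Quotient.mk (componentSetoid c) x :=
  Quotient.sound ⟨0, 1, rfl⟩

theorem fddsConnected_restrict_component (q : Quotient (componentSetoid c)) :
    FddsConnected
      (mapsTo_preimage_singleton_of_invariant c (componentSetoid_invariant c) q).restrict := by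
  obtain ⟨t, rfl⟩ := q.exists_rep
  refine ⟨⟨⟨t, rfl⟩⟩, fun a b => ?_⟩
  obtain ⟨m, n, hmn⟩ := Quotient.exact (a.2.trans b.2.symm)
  exact ⟨m, n, Subtype.ext (by simpa only [Set.MapsTo.coe_iterate_restrict] using hmn)⟩

theorem homCount_eq_of_forall_connected [Finite γ] {α β : Type} {x : α → α} {y : β → β}
    (H : ∀ (C : Type) [Finite C] (c : C → C), FddsConnected c → homCount c x = homCount c y) :
    homCount c x = homCount c y := by
  have hπ := componentSetoid_invariant c
  have := Fintype.ofFinite (Quotient (componentSetoid c))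
  rw [homCount, homCount, Nat.card_congr (homEquivPiFiber c hπ x),
    Nat.card_congr (homEquivPiFiber c hπ y), Nat.card_pi, Nat.card_pi]
  exact Finset.prod_congr rfl fun q _ => H _ _ (fddsConnected_restrict_component c q)

end Components

section Quotients

variable {C : Type} {c : C → C}

instance Setoid.finite [Finite C] : Finite (Setoid C) :=
  Finite.of_injective (fun s : Setoid C => s.r) fun _ _ h =>
    Setoid.ext fun a b => iff_of_eq (congrFun₂ h a b)

abbrev CompatibleSetoid (c : C → C) : Type :=
  {s : Setoid C // ∀ a b, s a b → s (c a) (c b)}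

noncomputable instance [Finite C] : Fintype (CompatibleSetoid c) := Fintype.ofFinite _

def CompatibleSetoid.quotMap (s : CompatibleSetoid c) : Quotient s.1 → Quotient s.1 :=
  Quotient.map c s.2

def CompatibleSetoid.bot (c : C → C) : CompatibleSetoid c :=
  ⟨⊥, fun _ _ h => congrArg c h⟩

theorem CompatibleSetoid.fddsIso_quotMap_bot (c : C → C) :
    FddsIso c (CompatibleSetoid.bot c).quotMap :=
  fddsIso_iff_exists_semiconj.mpr ⟨Equiv.ofBijective (Quotient.mk _)
    ⟨fun _ _ h => Quotient.exact h, Quotient.mk_surjective⟩, fun _ => rfl⟩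

theorem CompatibleSetoid.card_quotient_lt [Finite C] {s : CompatibleSetoid c}
    (hs : s ≠ CompatibleSetoid.bot c) : Nat.card (Quotient s.1) < Nat.card C := by
  refine lt_of_not_ge fun hle => hs (Subtype.ext (Setoid.ext fun a b => ?_))
  have hinj := (Quotient.mk_surjective (s := s.1)).bijective_of_nat_card_le hle |>.1
  exact ⟨fun h => hinj (Quotient.sound h), fun h => h ▸ s.1.refl a⟩

theorem bijective_sigma_fddsEmb_comp_mk {δ : Type} (y : δ → δ) :
    Bijective fun p : Σ s : CompatibleSetoid c, FddsEmb s.quotMap y =>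
      (⟨p.2.1 ∘ Quotient.mk _, fun a => p.2.2.2 (Quotient.mk _ a)⟩ : FddsHom c y) := by
  refine ⟨?_, fun h => ?_⟩
  · rintro ⟨s, k⟩ ⟨s', k'⟩ hkk'
    have hfun : k.1 ∘ Quotient.mk _ = k'.1 ∘ Quotient.mk _ := congrArg Subtype.val hkk'
    have hker : ∀ (s : CompatibleSetoid c) (k : FddsEmb s.quotMap y),
        s.1 = Setoid.ker (k.1 ∘ Quotient.mk _) := fun s k =>
      Setoid.ext fun a b => (k.2.1.eq_iff.trans Quotient.eq).symm
    obtain rfl : s = s' := Subtype.ext ((hker s k).trans (hfun ▸ hker s' k').symm)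
    exact congrArg (Sigma.mk s) (Subtype.ext (funext fun q => by
      induction q using Quotient.ind; exact congrFun hfun _))
  · refine ⟨⟨⟨Setoid.ker h.1, fun a b hab => ?_⟩, Quotient.lift h.1 fun _ _ => id, ?_, ?_⟩,
      rfl⟩
    · simp only [Setoid.ker_def] at hab ⊢
      rw [h.2 a, h.2 b, hab]
    · exact fun q q' => Quotient.inductionOn₂ q q' fun _ _ h => Quotient.sound h
    · exact fun q => by induction q using Quotient.ind; exact h.2 _

theorem homCount_eq_sum_embCount [Finite C] {δ : Type} [Finite δ] (y : δ → δ) :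
    homCount c y = ∑ s : CompatibleSetoid c, embCount s.quotMap y := by
  rw [homCount, ← Nat.card_congr (Equiv.ofBijective _ (bijective_sigma_fddsEmb_comp_mk y)),
    Nat.card_sigma]
  rfl

end Quotients

theorem nonempty_fddsEmb_of_embCount_eq_self {α β : Type} [Finite α] {x : α → α}
    {y : β → β}     (h : embCount x y = embCount x x) : Nonempty (FddsEmb x y) := by
  have hpos : 0 < embCount x y :=
    h ▸ Nat.card_pos_iff.mpr ⟨⟨⟨id, injective_id, fun _ => rfl⟩⟩, inferInstance⟩
  exact (Nat.card_pos_iff.mp hpos).1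

section Lovasz

variable {α β : Type} [Finite α] [Finite β] {x : α → α} {y : β → β}

/-- Strong induction on `Nat.card C`: in `homCount_eq_sum_embCount` every term except the
one for `⊥` counts embeddings of a strictly smaller quotient. -/
theorem embCount_eq_of_homCount_eq
    (H : ∀ (C : Type) [Finite C] (c : C → C), homCount c x = homCount c y)
    (C : Type) [Finite C] (c : C → C) : embCount c x = embCount c y := by
  induction hn : Nat.card C using Nat.strong_induction_on generalizing C with
  | _ n ih =>
  classical
  have hsplit : ∀ {δ : Type} [Finite δ] (z : δ → δ), homCount c z = embCount c z +
      ∑ s ∈ Finset.univ.erase (CompatibleSetoid.bot c), embCount s.quotMap z := fun z => by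
    rw [homCount_eq_sum_embCount, ← Finset.add_sum_erase _ _ (Finset.mem_univ _),
      ← embCount_congr_left z (CompatibleSetoid.fddsIso_quotMap_bot c)]
  have hrest : ∑ s ∈ Finset.univ.erase (CompatibleSetoid.bot c), embCount s.quotMap x =
      ∑ s ∈ Finset.univ.erase (CompatibleSetoid.bot c), embCount s.quotMap y :=
    Finset.sum_congr rfl fun s hs =>
      ih _ (hn ▸ CompatibleSetoid.card_quotient_lt (Finset.ne_of_mem_erase hs)) _ _ rfl
  have hxy := H C c
  rw [hsplit, hsplit, hrest] at hxy
  exact Nat.add_right_cancel hxy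

/-- Lovász (1967). -/
theorem fddsIso_of_homCount_eq
    (H : ∀ (C : Type) [Finite C] (c : C → C), homCount c x = homCount c y) : FddsIso x y := by
  have hemb := embCount_eq_of_homCount_eq H
  obtain ⟨e, he_inj, he⟩ := nonempty_fddsEmb_of_embCount_eq_self (hemb α x).symm
  obtain ⟨e', he'_inj, -⟩ := nonempty_fddsEmb_of_embCount_eq_self (hemb β y)
  have hbij := he_inj.bijective_of_nat_card_le (Nat.card_le_card_of_injective e' he'_inj)
  exact fddsIso_iff_exists_semiconj.mpr ⟨Equiv.ofBijective e hbij, he⟩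

theorem fddsIso_of_homCount_connected_eq
    (H : ∀ (C : Type) [Finite C] (c : C → C), FddsConnected c → homCount c x = homCount c y) :
    FddsIso x y :=
  fddsIso_of_homCount_eq fun _ _ c => homCount_eq_of_forall_connected c H

end Lovasz

section Periodic

variable {γ : Type} {c : γ → γ}

theorem exists_mem_periodicPts [Finite γ] (c : γ → γ) (t : γ) :
    ∃ u, u ∈ periodicPts c := by
  obtain ⟨i, j, hne, hij⟩ := Finite.exists_ne_map_eq_of_infinite (fun n : ℕ => c^[n] t)
  wlog hlt : i < j generalizing i j
  · exact this j i hne.symm hij.symm (by omega)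
  refine ⟨c^[i] t, mk_mem_periodicPts (Nat.sub_pos_of_lt hlt) ?_⟩
  change c^[j - i] (c^[i] t) = c^[i] t
  rw [← iterate_add_apply, Nat.sub_add_cancel hlt.le]
  exact hij.symm

theorem modEq_minimalPeriod_of_iterate_eq {u : γ} (hu : u ∈ periodicPts c) {i j : ℕ}
    (h : c^[i] u = c^[j] u) : i ≡ j [MOD minimalPeriod c u] := by
  have hp := minimalPeriod_pos_of_mem_periodicPts hu
  rw [← iterate_mod_minimalPeriod_eq, ← iterate_mod_minimalPeriod_eq (n := j)] at h
  exact (iterate_eq_iterate_iff_of_lt_minimalPeriod (Nat.mod_lt _ hp) (Nat.mod_lt _ hp)).mp h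

end Periodic

section Translation

variable {γ G : Type} [AddCommGroup G] {c : γ → γ} {a : G}

theorem FddsHom.apply_iterate_addRight (h : FddsHom c (· + a)) (n : ℕ) (t : γ) :
    h.1 (c^[n] t) = h.1 t + n • a := by
  rw [h.2.iterate_right n t, add_right_iterate_apply]

theorem FddsHom.minimalPeriod_nsmul_addRight (h : FddsHom c (· + a)) (u : γ) :
    minimalPeriod c u • a = 0 := by
  have := h.apply_iterate_addRight (minimalPeriod c u) u
  rwa [iterate_minimalPeriod, left_eq_add] at this

theorem FddsConnected.fddsHom_addRight_ext (hc : FddsConnected c) {h h' : FddsHom c (· + a)}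
    {u : γ} (hu : h.1 u = h'.1 u) : h = h' := by
  have hdiff : ∀ t, h.1 (c t) - h'.1 (c t) = h.1 t - h'.1 t := fun t => by
    rw [h.2 t, h'.2 t, add_sub_add_right_eq_sub]
  refine Subtype.ext (funext fun t => sub_eq_zero.mp ?_)
  rw [hc.apply_eq_of_invariant (φ := fun t => h.1 t - h'.1 t) hdiff t u, hu, sub_self]

/-- The homomorphism sends a point `t` with `c^[i] t = c^[j] u` to `j • a - i • a`; this
is well defined because `c^[j] u` determines `j` modulo the period of `u`. -/
theorem FddsConnected.nonempty_fddsHom_addRight (hc : FddsConnected c) {u : γ}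
    (hu : u ∈ periodicPts c) (ha : minimalPeriod c u • a = 0) :
    Nonempty (FddsHom c (· + a)) := by
  have hwd : ∀ {t : γ} {i j i' j' : ℕ}, c^[i] t = c^[j] u → c^[i'] t = c^[j'] u →
      j • a - i • a = j' • a - i' • a := fun {t i j i' j'} h h' => by
    have hiter : c^[j + i'] u = c^[j' + i] u :=
      calc c^[j + i'] u = c^[i'] (c^[i] t) := by rw [add_comm, iterate_add_apply, h]
        _ = c^[i] (c^[i'] t) := by rw [← iterate_add_apply, add_comm, iterate_add_apply]
        _ = c^[j' + i] u := by rw [h', ← iterate_add_apply, add_comm]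
    rw [sub_eq_sub_iff_add_eq_add, ← add_nsmul, ← add_nsmul, nsmul_eq_nsmul_iff_modEq]
    exact (modEq_minimalPeriod_of_iterate_eq hu hiter).of_dvd
      (addOrderOf_dvd_of_nsmul_eq_zero ha)
  choose i j hij using fun t => hc.2 t u
  refine ⟨⟨fun t => j t • a - i t • a, fun t => ?_⟩⟩
  have := hwd (t := t) (i := i (c t) + 1) (hij (c t)) (hij t)
  rwa [succ_nsmul, ← sub_sub, sub_eq_iff_eq_add] at this

theorem FddsConnected.homCount_addRight [DecidableEq G] (hc : FddsConnected c) {u : γ}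
    (hu : u ∈ periodicPts c) :
    homCount c (· + a) = if minimalPeriod c u • a = 0 then Nat.card G else 0 := by
  split_ifs with ha
  · obtain ⟨h₀⟩ := hc.nonempty_fddsHom_addRight hu ha
    refine Nat.card_congr (Equiv.ofBijective (fun h => h.1 u)
      ⟨fun h h' => hc.fddsHom_addRight_ext,
        fun z => ⟨⟨fun t => h₀.1 t + (z - h₀.1 u), fun t => ?_⟩, ?_⟩⟩)
    · simp only [h₀.2 t]; abel
    · simp
  · have : IsEmpty (FddsHom c (· + a)) := ⟨fun h => ha (h.minimalPeriod_nsmul_addRight u)⟩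
    exact Nat.card_of_isEmpty

end Translation

theorem Finset.card_powerset_filter_even_eq_not_even {ι : Type} {s : Finset ι}
    (hs : s.Nonempty) : (s.powerset.filter fun t => Even t.card).card =
      (s.powerset.filter fun t => ¬Even t.card).card := by
  have hsum := Finset.sum_powerset_neg_one_pow_card_of_nonempty hs
  rw [← Finset.sum_filter_add_sum_filter_not _ fun t => Even t.card,
    Finset.sum_congr rfl fun t ht => (Finset.mem_filter.mp ht).2.neg_one_pow,
    Finset.sum_congr rfl fun t ht =>
      (Nat.not_even_iff_odd.mp (Finset.mem_filter.mp ht).2).neg_one_pow,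
    Finset.sum_const, Finset.sum_const] at hsum
  simp only [Int.nsmul_eq_mul, mul_one, mul_neg] at hsum
  omega

section TranslationSum

variable (E : Finset ℕ)

def indicatorVec (I : Finset ℕ) : ∀ ℓ : E, ZMod ℓ :=
  fun ℓ => if (ℓ : ℕ) ∈ I then 1 else 0

/-- The summand indexed by `I` is a disjoint union of cycles of length `lcm I`. -/
def translationSum (S : Finset (Finset ℕ)) :
    (Σ _ : S, ∀ ℓ : E, ZMod ℓ) → Σ _ : S, ∀ ℓ : E, ZMod ℓ :=
  Sigma.map id fun I z => z + indicatorVec E I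

variable {E}

theorem nsmul_indicatorVec_eq_zero_iff {n : ℕ} {I : Finset ℕ} :
    n • indicatorVec E I = 0 ↔ ∀ ℓ ∈ E, ℓ ∈ I → ℓ ∣ n := by
  simp [funext_iff, indicatorVec, ZMod.natCast_eq_zero_iff]

theorem finite_pi_zmod (hE : ∀ ℓ ∈ E, 1 < ℓ) : Finite (∀ ℓ : E, ZMod ℓ) :=
  have : ∀ ℓ : E, NeZero (ℓ : ℕ) := fun ℓ => ⟨(zero_lt_one.trans (hE ℓ ℓ.2)).ne'⟩
  inferInstance

theorem FddsConnected.homCount_translationSum {γ : Type} [Finite γ] {c : γ → γ}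
    (hc : FddsConnected c) {u : γ} (hu : u ∈ periodicPts c) (hE : ∀ ℓ ∈ E, 1 < ℓ)
    (P : Finset ℕ → Prop) [DecidablePred P] :
    homCount c (translationSum E (E.powerset.filter P)) =
      ((E.filter (· ∣ minimalPeriod c u)).powerset.filter P).card *
        Nat.card (∀ ℓ : E, ZMod ℓ) := by
  have := finite_pi_zmod hE
  rw [translationSum, hc.homCount_sigmaMap]
  simp only [hc.homCount_addRight hu, nsmul_indicatorVec_eq_zero_iff]
  rw [Finset.sum_coe_sort (E.powerset.filter P) fun I =>
      if ∀ ℓ ∈ E, ℓ ∈ I → ℓ ∣ minimalPeriod c u then Nat.card (∀ ℓ : E, ZMod ℓ)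
      else 0,
    ← Finset.sum_filter, Finset.sum_const, smul_eq_mul]
  congr 2
  ext I
  simp only [Finset.mem_filter, Finset.mem_powerset, Finset.subset_iff]
  grind

theorem isFixedPt_translationSum_even :
    IsFixedPt (translationSum E (E.powerset.filter fun I => Even I.card))
      ⟨⟨∅, by simp⟩, 0⟩ :=
  congrArg (Sigma.mk _) ((zero_add _).trans (funext fun _ => if_neg (Finset.notMem_empty _)))

theorem not_isFixedPt_translationSum_odd (hE : ∀ ℓ ∈ E, 1 < ℓ)
    (z : Σ _ : E.powerset.filter fun I => ¬Even I.card, ∀ ℓ : E, ZMod ℓ) :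
    ¬IsFixedPt (translationSum E (E.powerset.filter fun I => ¬Even I.card)) z := by
  obtain ⟨⟨I, hI⟩, v⟩ := z
  intro hfix
  have hvec : indicatorVec E I = 0 := add_eq_left.mp (sigma_mk_injective hfix)
  obtain ⟨hIE, hodd⟩ := Finset.mem_filter.mp hI
  obtain ⟨ℓ, hℓ⟩ := Finset.nonempty_of_ne_empty fun h : I = ∅ => hodd (by simp [h])
  have hone := congrFun hvec ⟨ℓ, Finset.mem_powerset.mp hIE hℓ⟩
  simp only [indicatorVec, hℓ, if_true, Pi.zero_apply, ZMod.one_eq_zero_iff] at hone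
  exact (hE ℓ (Finset.mem_powerset.mp hIE hℓ)).ne' hone

end TranslationSum

theorem nonempty_fddsHom_of_homCount_pos {γ α : Type} {c : γ → γ} {f : α → α}
    (h : 0 < homCount c f) : Nonempty (FddsHom c f) :=
  (Nat.card_pos_iff.mp h).1

/-- Let `E` be the set of cycle lengths of `f`, all `≥ 2`. A connected system with a
homomorphism to `f` has its period divisible by some `ℓ ∈ E`, so it sees as many even as
odd subsets of `E` dividing its period; hence `f` times the even translation sum is
isomorphic to `f` times the odd one, while only the even one has a fixed point. -/
theorem Cancelable.exists_isFixedPt {α : Type} [Fintype α] {f : α → α} (hf : Cancelable f) :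
    ∃ a, IsFixedPt f a := by
  classical
  by_contra! hfix
  set E := (Finset.univ.filter (· ∈ periodicPts f)).image (minimalPeriod f)
  have hE : ∀ ℓ ∈ E, 1 < ℓ := by
    simp only [E, Finset.mem_image, Finset.mem_filter, Finset.mem_univ, true_and]
    rintro _ ⟨a, ha, rfl⟩
    exact lt_of_le_of_ne (minimalPeriod_pos_of_mem_periodicPts ha)
      (Ne.symm fun h => hfix a (minimalPeriod_eq_one_iff_isFixedPt.mp h))
  have hcover : ∀ n a, 0 < n → IsPeriodicPt f n a → ∃ ℓ ∈ E, ℓ ∣ n := fun n a hn ha =>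
    ⟨minimalPeriod f a,
      Finset.mem_image_of_mem _ (by simpa using mk_mem_periodicPts hn ha),
      ha.minimalPeriod_dvd⟩
  have := finite_pi_zmod hE
  let B := translationSum E (E.powerset.filter fun I => Even I.card)
  let C := translationSum E (E.powerset.filter fun I => ¬Even I.card)
  have hBC : FddsIso (Prod.map f B) (Prod.map f C) :=
    fddsIso_of_homCount_connected_eq fun D _ d hd => by
      obtain ⟨u, hu⟩ := exists_mem_periodicPts d hd.1.some
      rw [homCount_prodMap, homCount_prodMap]
      rcases (homCount d f).eq_zero_or_pos with h0 | hpos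
      · rw [h0, zero_mul, zero_mul]
      obtain ⟨h⟩ := nonempty_fddsHom_of_homCount_pos hpos
      obtain ⟨ℓ, hℓE, hℓ⟩ := hcover _ (h.1 u) (minimalPeriod_pos_of_mem_periodicPts hu)
        ((isPeriodicPt_minimalPeriod d u).map h.2)
      rw [hd.homCount_translationSum hu hE, hd.homCount_translationSum hu hE,
        Finset.card_powerset_filter_even_eq_not_even
          ⟨ℓ, Finset.mem_filter.mpr ⟨hℓE, hℓ⟩⟩]
  have := Fintype.ofFinite (Σ _ : E.powerset.filter fun I => Even I.card, ∀ ℓ : E, ZMod ℓ)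
  have := Fintype.ofFinite (Σ _ : E.powerset.filter fun I => ¬Even I.card, ∀ ℓ : E, ZMod ℓ)
  obtain ⟨z, hz⟩ := (hf _ _ B C hBC).exists_isFixedPt isFixedPt_translationSum_even
  exact not_isFixedPt_translationSum_odd hE z hz

theorem homCount_pos_of_isFixedPt {γ α : Type} [Finite γ] [Finite α] [Nonempty γ]
    (c : γ → γ) {f : α → α} {a : α} (ha : IsFixedPt f a) : 0 < homCount c f :=
  Nat.card_pos_iff.mpr ⟨⟨⟨fun _ => a, fun _ => ha.symm⟩⟩, inferInstance⟩

theorem FddsConnected.homCount_polyEvalNC {C : Type} [Finite C] {c : C → C}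
    (hc : FddsConnected c) {m : ℕ} {γ : Fin m → Type} [∀ i, Finite (γ i)]
    (g : ∀ i, γ i → γ i) {α : Type} [Finite α] (f : α → α) :
    homCount c (polyEvalNC g f) = ∑ i, homCount c (g i) * homCount c f ^ (i.val + 1) := by
  change homCount c (Sigma.map id fun i => Prod.map (g i) (powMap f (i.val + 1))) = _
  simp only [hc.homCount_sigmaMap, homCount_prodMap, homCount_powMap]

theorem strictMono_sum_mul_pow_succ {m : ℕ} {a : Fin m → ℕ} (ha : ∃ i, 0 < a i) :
    StrictMono fun x : ℕ => ∑ i, a i * x ^ (i.val + 1) := by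
  obtain ⟨i₀, hi₀⟩ := ha
  intro x y hxy
  refine Finset.sum_lt_sum (fun i _ => Nat.mul_le_mul_left _ (Nat.pow_le_pow_left hxy.le _))
    ⟨i₀, Finset.mem_univ _,
      Nat.mul_lt_mul_of_pos_left (Nat.pow_lt_pow_left hxy (by omega)) hi₀⟩

/-- A constant-free polynomial `P = Σ_{i=1}^m A_i X^i` with at least
one cancelable coefficient is injective up to isomorphism. -/
theorem polyNC_injective_of_cancelable {m : ℕ} {γ : Fin m → Type} [∀ i, Fintype (γ i)]
    (g : ∀ i, γ i → γ i) (hc : ∃ i : Fin m, Cancelable (g i))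
    {α β : Type} [Fintype α] [Fintype β] (f : α → α) (f' : β → β)
    (h : FddsIso (polyEvalNC g f) (polyEvalNC g f')) :
    FddsIso f f' := by
  obtain ⟨i₀, hi₀⟩ := hc
  obtain ⟨a₀, ha₀⟩ := hi₀.exists_isFixedPt
  refine fddsIso_of_homCount_connected_eq fun C _ c hconn => ?_
  have := hconn.1
  have hpoly := homCount_congr_right c h
  rw [hconn.homCount_polyEvalNC, hconn.homCount_polyEvalNC] at hpoly
  exact (strictMono_sum_mul_pow_succ ⟨i₀, homCount_pos_of_isFixedPt c ha₀⟩).injective hpoly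
end

section
/- Let a_1, …, a_m be integers all strictly greater than 1, let A_j be the cycle C_{a_j} for each j, let A = A_1 ⊕ ⋯ ⊕ A_m, and let k ≥ 1 be an integer. Then there exist two FDDS X and Y that are not isomorphic, both of which are permutations (their transition functions are bijective), such that A_j × X^k ≅ A_j × Y^k for every 1 ≤ j ≤ m, and consequently A × X^k ≅ A × Y^k. -/
/-- The cycle `C_b` as an FDDS: the successor map on `ZMod b`. -/
def cycleMap (b : ℕ) (z : ZMod b) : ZMod b := z + 1

/-- The sum of the cycles `C_{a 1} ⊕ ⋯ ⊕ C_{a m}`. -/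
def sumCyclesMap {m : ℕ} (a : Fin m → ℕ) (q : Σ j : Fin m, ZMod (a j)) :
    Σ j : Fin m, ZMod (a j) :=
  ⟨q.1, q.2 + 1⟩

/-! In the semiring of FDDS up to isomorphism, the cycle `u = C_n` and the identity
`v = n C_1` on `n` points satisfy `u × u ≅ u × v`, so `u` annihilates `u - v`.
Hence every `C_{a_j}` annihilates `X - Y := ∏_j (C_{a_j} - a_j C_1)`, which is realised by
expanding the product: `X` collects the terms with an even number of factors `a_j C_1`, `Y`
the others. Counting fixed points is a semiring morphism sending `C_{a_j}` to `0` and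
`a_j C_1` to `a_j`, so it separates `X` from `Y`. Finally `A_j × X ≅ A_j × Y` is compatible with
products and sums, so it passes to `k`-th powers and to `A`. -/

open Function

namespace FddsIso

variable {α β γ δ : Type}

theorem refl (f : α → α) : FddsIso f f := ⟨Equiv.refl α, rfl⟩

theorem symm {f : α → α} {g : β → β} : FddsIso f g → FddsIso g f
  | ⟨e, he⟩ => ⟨e.symm, funext fun b =>
      e.injective <| by simpa using (congrFun he (e.symm b)).symm⟩

theorem trans {f : α → α} {g : β → β} {h : γ → γ} :
    FddsIso f g → FddsIso g h → FddsIso f h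
  | ⟨e, he⟩, ⟨e', he'⟩ => ⟨e.trans e', by
      rw [Equiv.coe_trans, comp_assoc, he, ← comp_assoc, he', comp_assoc]⟩

theorem prodMap {f : α → α} {g : β → β} {f' : γ → γ} {g' : δ → δ} :
    FddsIso f f' → FddsIso g g' → FddsIso (Prod.map f g) (Prod.map f' g')
  | ⟨e, he⟩, ⟨e', he'⟩ =>
    ⟨e.prodCongr e', funext fun p => Prod.ext (congrFun he p.1) (congrFun he' p.2)⟩

theorem sumMap {f : α → α} {g : β → β} {f' : γ → γ} {g' : δ → δ} :
    FddsIso f f' → FddsIso g g' → FddsIso (Sum.map f g) (Sum.map f' g')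
  | ⟨e, he⟩, ⟨e', he'⟩ => ⟨e.sumCongr e', funext fun
      | .inl s => congrArg Sum.inl (congrFun he s)
      | .inr t => congrArg Sum.inr (congrFun he' t)⟩

theorem sigmaMap {ι : Type} {α β : ι → Type} {f : ∀ i, α i → α i}
    {g : ∀ i, β i → β i} (h : ∀ i, FddsIso (f i) (g i)) :
    FddsIso (Sigma.map id f) (Sigma.map id g) := by
  choose e he using h
  exact ⟨Equiv.sigmaCongrRight e, funext fun ⟨i, s⟩ =>
    Sigma.ext rfl (heq_of_eq (congrFun (he i) s))⟩

theorem prodMap_comm (f : α → α) (g : β → β) : FddsIso (Prod.map f g) (Prod.map g f) :=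
  ⟨Equiv.prodComm α β, rfl⟩

theorem prodMap_assoc (f : α → α) (g : β → β) (h : γ → γ) :
    FddsIso (Prod.map (Prod.map f g) h) (Prod.map f (Prod.map g h)) :=
  ⟨Equiv.prodAssoc α β γ, rfl⟩

theorem prodMap_left_comm (f : α → α) (g : β → β) (h : γ → γ) :
    FddsIso (Prod.map f (Prod.map g h)) (Prod.map g (Prod.map f h)) :=
  (prodMap_assoc f g h).symm.trans <| ((prodMap_comm f g).prodMap (refl h)).trans <|
    prodMap_assoc g f h

theorem sumMap_comm (f : α → α) (g : β → β) : FddsIso (Sum.map f g) (Sum.map g f) :=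
  ⟨Equiv.sumComm α β, funext fun p => by cases p <;> rfl⟩

theorem prodMap_sumMap (f : α → α) (g : β → β) (h : γ → γ) :
    FddsIso (Prod.map f (Sum.map g h)) (Sum.map (Prod.map f g) (Prod.map f h)) :=
  ⟨Equiv.prodSumDistrib α β γ, funext fun ⟨_, p⟩ => by cases p <;> rfl⟩

theorem sigmaMap_prodMap {ι : Type} {α : ι → Type} (f : ∀ i, α i → α i) (g : β → β) :
    FddsIso (Prod.map (Sigma.map id f) g) (Sigma.map id fun i => Prod.map (f i) g) :=
  ⟨Equiv.sigmaProdDistrib α β, rfl⟩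

theorem powMap_zero (f : α → α) (g : β → β) : FddsIso (powMap f 0) (powMap g 0) :=
  ⟨Equiv.ofUnique _ _, funext fun _ => Subsingleton.elim _ _⟩

theorem powMap_succ (f : α → α) (k : ℕ) :
    FddsIso (powMap f (k + 1)) (Prod.map f (powMap f k)) :=
  ⟨(Fin.consEquiv fun _ => α).symm, rfl⟩

theorem card_fixedPoints_eq {f : α → α} {g : β → β} :
    FddsIso f g → Nat.card (fixedPoints f) = Nat.card (fixedPoints g)
  | ⟨e, he⟩ => Nat.card_congr <| e.subtypeEquiv fun s => by
      rw [mem_fixedPoints, mem_fixedPoints, IsFixedPt, IsFixedPt, ← comp_apply (f := g),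
        ← congrFun he s, comp_apply, e.apply_eq_iff_eq]

variable {ε : Type} {c : α → α}

theorem prodMap_prodMap_of_prodMap {x : β → β} {y : γ → γ} {x' : δ → δ} {y' : ε → ε}
    (h : FddsIso (Prod.map c x) (Prod.map c y)) (h' : FddsIso (Prod.map c x') (Prod.map c y')) :
    FddsIso (Prod.map c (Prod.map x x')) (Prod.map c (Prod.map y y')) :=
  (prodMap_assoc c x x').symm.trans <| (h.prodMap (refl x')).trans <|
    (prodMap_assoc c y x').trans <| (prodMap_left_comm c y x').trans <|
    ((refl y).prodMap h').trans (prodMap_left_comm y c y')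

theorem prodMap_sumMap_of_prodMap {x : β → β} {y : γ → γ} {x' : δ → δ} {y' : ε → ε}
    (h : FddsIso (Prod.map c x) (Prod.map c y)) (h' : FddsIso (Prod.map c x') (Prod.map c y')) :
    FddsIso (Prod.map c (Sum.map x x')) (Prod.map c (Sum.map y y')) :=
  (prodMap_sumMap c x x').trans <| (h.sumMap h').trans (prodMap_sumMap c y y').symm

theorem prodMap_powMap_of_prodMap {x : β → β} {y : γ → γ}
    (h : FddsIso (Prod.map c x) (Prod.map c y)) :
    ∀ k, FddsIso (Prod.map c (powMap x k)) (Prod.map c (powMap y k))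
  | 0 => (refl c).prodMap (powMap_zero x y)
  | k + 1 => ((refl c).prodMap (powMap_succ x k)).trans <|
      (h.prodMap_prodMap_of_prodMap (h.prodMap_powMap_of_prodMap k)).trans
      ((refl c).prodMap (powMap_succ y k)).symm

theorem sigmaMap_prodMap_of_prodMap {ι : Type} {α : ι → Type} {f : ∀ i, α i → α i}
    {x : β → β} {y : γ → γ} (h : ∀ i, FddsIso (Prod.map (f i) x) (Prod.map (f i) y)) :
    FddsIso (Prod.map (Sigma.map id f) x) (Prod.map (Sigma.map id f) y) :=
  (sigmaMap_prodMap f x).trans <| (sigmaMap h).trans (sigmaMap_prodMap f y).symm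

variable {u : β → β} {v : γ → γ} {x : δ → δ} {y : ε → ε}

theorem prodMap_sumMap_swap_of_prodMap_left
    (h : FddsIso (Prod.map c x) (Prod.map c y)) :
    FddsIso (Prod.map c (Sum.map (Prod.map u x) (Prod.map v y)))
      (Prod.map c (Sum.map (Prod.map u y) (Prod.map v x))) :=
  ((refl _).prodMap_prodMap_of_prodMap h).prodMap_sumMap_of_prodMap
    ((refl _).prodMap_prodMap_of_prodMap h.symm)

theorem prodMap_sumMap_swap_of_prodMap_right
    (h : FddsIso (Prod.map c u) (Prod.map c v)) :
    FddsIso (Prod.map c (Sum.map (Prod.map u x) (Prod.map v y)))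
      (Prod.map c (Sum.map (Prod.map u y) (Prod.map v x))) :=
  ((h.prodMap_prodMap_of_prodMap (refl _)).prodMap_sumMap_of_prodMap
    (h.symm.prodMap_prodMap_of_prodMap (refl _))).trans <|
    (refl c).prodMap (sumMap_comm _ _)

end FddsIso

section FixedPoints

variable {α β : Type}

theorem card_fixedPoints_prodMap (f : α → α) (g : β → β) :
    Nat.card (fixedPoints (Prod.map f g)) =
      Nat.card (fixedPoints f) * Nat.card (fixedPoints g) := by
  have : fixedPoints (Prod.map f g) = fixedPoints f ×ˢ fixedPoints g :=
    Set.ext isFixedPt_prodMap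
  rw [this, Nat.card_congr (Equiv.Set.prod _ _), Nat.card_prod]

theorem card_fixedPoints_sumMap [Finite α] [Finite β] (f : α → α) (g : β → β) :
    Nat.card (fixedPoints (Sum.map f g)) =
      Nat.card (fixedPoints f) + Nat.card (fixedPoints g) := by
  rw [← Nat.card_sum]
  exact Nat.card_congr <| Equiv.subtypeSum.trans <| Equiv.sumCongr
    (Equiv.subtypeEquivRight fun _ => Sum.inl_injective.eq_iff)
    (Equiv.subtypeEquivRight fun _ => Sum.inr_injective.eq_iff)

end FixedPoints

theorem cycleMap_bijective (n : ℕ) : Bijective (cycleMap n) :=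
  (Equiv.addRight (1 : ZMod n)).bijective

theorem fixedPoints_cycleMap {n : ℕ} (hn : 1 < n) : fixedPoints (cycleMap n) = ∅ := by
  have : Fact (1 < n) := ⟨hn⟩
  exact Set.eq_empty_of_forall_notMem fun z hz => one_ne_zero (add_eq_left.mp hz)

theorem FddsIso.cycleMap_prodMap_cycleMap (n : ℕ) :
    FddsIso (Prod.map (cycleMap n) (cycleMap n)) (Prod.map (cycleMap n) (id : ZMod n → ZMod n)) :=
  ⟨{ toFun := fun p => (p.1, p.2 - p.1)
     invFun := fun p => (p.1, p.2 + p.1)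
     left_inv := fun p => by simp
     right_inv := fun p => by simp },
   funext fun p => by simp [cycleMap]⟩

theorem exists_bijective_card_fixedPoints_ne_and_cycleMap_prodMap_iso {m : ℕ} (a : Fin m → ℕ)
    (ha : ∀ j, 1 < a j) :
    ∃ (σ τ : Type) (_ : Fintype σ) (_ : Fintype τ) (x : σ → σ) (y : τ → τ),
      Bijective x ∧ Bijective y ∧ Nat.card (fixedPoints x) ≠ Nat.card (fixedPoints y) ∧
      ∀ j, FddsIso (Prod.map (cycleMap (a j)) x) (Prod.map (cycleMap (a j)) y) := by
  induction m with
  | zero =>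
    refine ⟨Unit, Empty, inferInstance, inferInstance, id, id, bijective_id, bijective_id,
      ?_, fun j => j.elim0⟩
    simp [fixedPoints_id]
  | succ m ih =>
    obtain ⟨σ, τ, _, _, x, y, hx, hy, hfix, hiso⟩ := ih (fun j => a j.succ) fun j => ha j.succ
    have : NeZero (a 0) := ⟨by have := ha 0; omega⟩
    refine ⟨_, _, inferInstance, inferInstance,
      Sum.map (Prod.map (cycleMap (a 0)) x) (Prod.map (id : ZMod (a 0) → ZMod (a 0)) y),
      Sum.map (Prod.map (cycleMap (a 0)) y) (Prod.map (id : ZMod (a 0) → ZMod (a 0)) x),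
      Sum.map_bijective.2 ⟨(cycleMap_bijective _).prodMap hx, bijective_id.prodMap hy⟩,
      Sum.map_bijective.2 ⟨(cycleMap_bijective _).prodMap hy, bijective_id.prodMap hx⟩,
      ?_, Fin.cases ?_ fun j => (hiso j).prodMap_sumMap_swap_of_prodMap_left⟩
    · simp only [card_fixedPoints_sumMap, card_fixedPoints_prodMap, fixedPoints_cycleMap (ha 0),
        fixedPoints_id, Nat.card_univ, Nat.card_zmod]
      simpa [NeZero.ne] using hfix.symm
    · exact (FddsIso.cycleMap_prodMap_cycleMap _).prodMap_sumMap_swap_of_prodMap_right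

theorem sum_cycles_monomial_not_injective_general {m : ℕ} (a : Fin m → ℕ)
    (ha : ∀ j, 1 < a j) (k : ℕ) :
    ∃ (σ τ : Type) (_ : Fintype σ) (_ : Fintype τ) (x : σ → σ) (y : τ → τ),
      Function.Bijective x ∧ Function.Bijective y ∧ ¬ FddsIso x y ∧
      (∀ j : Fin m, FddsIso (Prod.map (cycleMap (a j)) (powMap x k))
        (Prod.map (cycleMap (a j)) (powMap y k))) ∧
      FddsIso (Prod.map (sumCyclesMap a) (powMap x k))
        (Prod.map (sumCyclesMap a) (powMap y k)) := by
  obtain ⟨σ, τ, _, _, x, y, hx, hy, hfix, hiso⟩ :=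
    exists_bijective_card_fixedPoints_ne_and_cycleMap_prodMap_iso a ha
  have hpow j := (hiso j).prodMap_powMap_of_prodMap k
  exact ⟨σ, τ, inferInstance, inferInstance, x, y, hx, hy,
    fun h => hfix h.card_fixedPoints_eq, hpow,
    FddsIso.sigmaMap_prodMap_of_prodMap hpow⟩

/-- If `A = C_{a 1} ⊕ ⋯ ⊕ C_{a m}` is a sum of cycles of lengths all
greater than `1` and `k ≥ 1`, then there are two non-isomorphic permutation FDDS
`X, Y` with `A_j × X^k ≅ A_j × Y^k` for every `j`, and hence `A × X^k ≅ A × Y^k`. -/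
theorem sum_cycles_monomial_not_injective {m : ℕ} (a : Fin m → ℕ)
    (ha : ∀ j, 1 < a j) (k : ℕ) (hk : 1 ≤ k) :
    ∃ (σ τ : Type) (_ : Fintype σ) (_ : Fintype τ) (x : σ → σ) (y : τ → τ),
      Function.Bijective x ∧ Function.Bijective y ∧ ¬ FddsIso x y ∧
      (∀ j : Fin m, FddsIso (Prod.map (cycleMap (a j)) (powMap x k))
        (Prod.map (cycleMap (a j)) (powMap y k))) ∧
      FddsIso (Prod.map (sumCyclesMap a) (powMap x k))
        (Prod.map (sumCyclesMap a) (powMap y k)) :=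
  sum_cycles_monomial_not_injective_general a ha k
end
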